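/- Infinite-horizon additivity: let X = ⊕_{i∈I} X_i with A X_i ⊆ X_i, g : X → ℝ≥0 additive across the decomposition (g(x) = Σ_i g(ρ_i x)), B : U → X linear, E_i = B⁻¹(X_i), and α ∈ (0,1). Suppose a policy π with components π_t ∈ Σ_i E_i for all t is applied from initial state x; write π_t = Σ_i π_{i,t} with π_{i,t} ∈ E_i. Then the resulting state trajectory satisfies ρ_i(x_t) = x_{i,t} for all t, where x_{i,0} = ρ_i(x) and x_{i,t+1} = A x_{i,t} + B π_{i,t}; consequently J(x, π) = Σ_{i∈I} J̄_i(ρ_i x, π_i) (as sums in ℝ≥0∞), where J̄_i is the discounted cost of the i-th subsystem. -/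

import Mathlib

/-!
Each projection `ρ i` commutes with `A` (the summands are `A`-invariant) and sends `B (π t)` to
`B (πi i t)`, so it carries the trajectory onto the `i`-th subsystem trajectory. Additivity of `g`
then splits every stage cost, and in `ℝ≥0∞` a series of nonnegative terms commutes with a finite sum.
-/


/-- State trajectory driven by a forcing sequence `f`: `x_0 = x`,
`x_{t+1} = A x_t + f t`. -/
def trajF {F X : Type*} [Field F] [AddCommGroup X] [Module F X]
    (A : X →ₗ[F] X) (x : X) (f : ℕ → X) : ℕ → X
  | 0 => x
  | (t + 1) => A (trajF A x f t) + f t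

/-- Discounted infinite-horizon cost of a forced trajectory, taken in `ℝ≥0∞`. -/
noncomputable def JinfF {F X : Type*} [Field F] [AddCommGroup X] [Module F X]
    (g : X → ℝ) (α : ℝ) (A : X →ₗ[F] X) (x : X) (f : ℕ → X) : ENNReal :=
  ∑' t : ℕ, ENNReal.ofReal (α ^ t * g (trajF A x f t))

section Trajectory

variable {F X Y : Type*} [Field F] [AddCommGroup X] [Module F X] [AddCommGroup Y] [Module F Y]

theorem map_trajF (P : X →ₗ[F] Y) {A : X →ₗ[F] X} {A' : Y →ₗ[F] Y}
    (hPA : ∀ y, P (A y) = A' (P y)) (x : X) {f : ℕ → X} {f' : ℕ → Y}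
    (hf : ∀ s, P (f s) = f' s) (t : ℕ) :
    P (trajF A x f t) = trajF A' (P x) f' t := by
  induction t with
  | zero => rfl
  | succ t ih => rw [trajF, trajF, map_add, hPA, ih, hf]

theorem JinfF_eq_sum_of_cost_eq_sum {ι : Type*} (s : Finset ι) {g : X → ℝ} (hg : ∀ y, 0 ≤ g y)
    {α : ℝ} (hα : 0 ≤ α) (A : X →ₗ[F] X) (x : X) (f : ℕ → X) (xs : ι → X) (fs : ι → ℕ → X)
    (hcost : ∀ t, g (trajF A x f t) = ∑ i ∈ s, g (trajF A (xs i) (fs i) t)) :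
    JinfF g α A x f = ∑ i ∈ s, JinfF g α A (xs i) (fs i) := by
  unfold JinfF
  rw [← Summable.tsum_finsetSum fun i _ => ENNReal.summable]
  congr 1 with t
  rw [hcost, Finset.mul_sum,
    ENNReal.ofReal_sum_of_nonneg fun i _ => mul_nonneg (pow_nonneg hα t) (hg _)]

end Trajectory

section Projections

variable {F X : Type*} [Field F] [AddCommGroup X] [Module F X] {ι : Type*} [Fintype ι]
  [DecidableEq ι] {Xs : ι → Submodule F X} {ρ : ι → X →ₗ[F] X}

theorem apply_sum_of_forall_mem (hρproj : ∀ i j, ∀ x ∈ Xs j, ρ i x = if i = j then x else 0)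
    {y : ι → X} (hy : ∀ j, y j ∈ Xs j) (i : ι) : ρ i (∑ j, y j) = y i := by
  simp [hρproj _ _ _ (hy _)]

theorem apply_comm_of_invariant {A : X →ₗ[F] X} (hA : ∀ i, ∀ x ∈ Xs i, A x ∈ Xs i)
    (hρmem : ∀ i x, ρ i x ∈ Xs i) (hρsum : ∀ x, ∑ i, ρ i x = x)
    (hρproj : ∀ i j, ∀ x ∈ Xs j, ρ i x = if i = j then x else 0) (i : ι) (y : X) :
    ρ i (A y) = A (ρ i y) := by
  conv_lhs => rw [← hρsum y, map_sum]
  exact apply_sum_of_forall_mem hρproj (fun j => hA j _ (hρmem j y)) i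

end Projections

theorem discounted_cost_additive_of_split_policy_general
    {F U X : Type*} [Field F] [AddCommGroup U] [Module F U]
    [AddCommGroup X] [Module F X] {ι : Type*} [Fintype ι] [DecidableEq ι]
    (A : X →ₗ[F] X) (B : U →ₗ[F] X)
    (Xs : ι → Submodule F X)
    (hA : ∀ i, ∀ x ∈ Xs i, A x ∈ Xs i)
    (ρ : ι → X →ₗ[F] X)
    (hρmem : ∀ i x, ρ i x ∈ Xs i)
    (hρsum : ∀ x, ∑ i, ρ i x = x)
    (hρproj : ∀ i j, ∀ x ∈ Xs j, ρ i x = if i = j then x else 0)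
    (g : X → ℝ) (hgnn : ∀ x, 0 ≤ g x)
    (hgadd : ∀ x, g x = ∑ i, g (ρ i x))
    (Es : ι → Submodule F U) (hEs : ∀ i, Es i = Submodule.comap B (Xs i))
    (α : ℝ) (hα : α ∈ Set.Ioo (0 : ℝ) 1)
    (x : X) (π : ℕ → U) (πi : ι → ℕ → U)
    (hπmem : ∀ i t, πi i t ∈ Es i)
    (hπsum : ∀ t, π t = ∑ i, πi i t) :
    (∀ i t, ρ i (trajF A x (fun s => B (π s)) t) =
        trajF A (ρ i x) (fun s => B (πi i s)) t) ∧
    JinfF g α A x (fun s => B (π s)) =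
      ∑ i, JinfF g α A (ρ i x) (fun s => B (πi i s)) := by
  have hBπi : ∀ i t, B (πi i t) ∈ Xs i := fun i t => by
    simpa only [hEs i, Submodule.mem_comap] using hπmem i t
  have hρB : ∀ i t, ρ i (B (π t)) = B (πi i t) := fun i t => by
    rw [hπsum t, map_sum]
    exact apply_sum_of_forall_mem hρproj (fun j => hBπi j t) i
  have htraj : ∀ i t, ρ i (trajF A x (fun s => B (π s)) t) =
      trajF A (ρ i x) (fun s => B (πi i s)) t := fun i =>
    map_trajF (ρ i) (apply_comm_of_invariant hA hρmem hρsum hρproj i) x (hρB i)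
  refine ⟨htraj, JinfF_eq_sum_of_cost_eq_sum _ hgnn hα.1.le A x _ _ _ fun t => ?_⟩
  simp only [hgadd (trajF A x _ t), htraj]

/-- if the policy decomposes as `π_t = Σ_i π_{i,t}` with
`π_{i,t} ∈ E_i`, then the trajectory projects onto the subsystem trajectories
(`ρ_i x_t = x_{i,t}`), and the discounted cost splits as the sum of the
subsystem discounted costs. -/
theorem discounted_cost_additive_of_split_policy
    {F U X : Type*} [Field F] [AddCommGroup U] [Module F U]
    [AddCommGroup X] [Module F X] {ι : Type*} [Fintype ι] [DecidableEq ι]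
    (A : X →ₗ[F] X) (B : U →ₗ[F] X)
    (Xs : ι → Submodule F X) (hXs : DirectSum.IsInternal Xs)
    (hA : ∀ i, ∀ x ∈ Xs i, A x ∈ Xs i)
    (ρ : ι → X →ₗ[F] X)
    (hρmem : ∀ i x, ρ i x ∈ Xs i)
    (hρsum : ∀ x, ∑ i, ρ i x = x)
    (hρproj : ∀ i j, ∀ x ∈ Xs j, ρ i x = if i = j then x else 0)
    (g : X → ℝ) (hgnn : ∀ x, 0 ≤ g x) (hg0 : g 0 = 0)
    (hgadd : ∀ x, g x = ∑ i, g (ρ i x))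
    (Es : ι → Submodule F U) (hEs : ∀ i, Es i = Submodule.comap B (Xs i))
    (α : ℝ) (hα : α ∈ Set.Ioo (0 : ℝ) 1)
    (x : X) (π : ℕ → U) (πi : ι → ℕ → U)
    (hπmem : ∀ i t, πi i t ∈ Es i)
    (hπsum : ∀ t, π t = ∑ i, πi i t) :
    (∀ i t, ρ i (trajF A x (fun s => B (π s)) t) =
        trajF A (ρ i x) (fun s => B (πi i s)) t) ∧
    JinfF g α A x (fun s => B (π s)) =
      ∑ i, JinfF g α A (ρ i x) (fun s => B (πi i s)) :=
  discounted_cost_additive_of_split_policy_general A B Xs hA ρ hρmem hρsum hρproj g hgnn hgadd Es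
    hEs α hα x π πi hπmem hπsum
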